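/- Let (v,q) ∈ V × Q with (v,q) ≠ (0,0) and set S := S(v,q) := sup over (0,0) ≠ (w,r) ∈ V × Q of |A((v,q);(w,r))| / (‖w‖_V² + ‖r‖_Q²)^{1/2}. Then the pressure component satisfies ‖q‖_Q² ≤ 2C_b²S² + 2C_b²M²α⁻¹ S (‖v‖_V² + ‖q‖_Q²)^{1/2}. -/

import Mathlib

/-!
Testing `A((v,q); ·)` with `(v,q)` itself kills the skew-Hermitian coupling in the real part, so
coercivity gives `α‖v‖² ≤ S ‖(v,q)‖`. Testing with `(ṽ,0)`, where `ṽ` is the right inverse of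
the coupling at `q`, gives `‖q‖² = d(q,ṽ) = A((v,q);(ṽ,0)) - a(v,ṽ)`, hence
`‖q‖ ≤ C_b (S + M‖v‖)`. Squaring with `(x + y)² ≤ 2x² + 2y²` and inserting the velocity bound
yields the claim.
-/

open Real

section SupQuotient

variable {V Q E : Type*} [SeminormedAddCommGroup V] [SeminormedAddCommGroup Q]
  [SeminormedAddCommGroup E]

/-- The paper's `S(v,q)` for `F = A((v,q); ·)`: the dual norm of `F` for the Euclidean product
norm on `V × Q`. -/
noncomputable def supQuotient (F : V × Q → E) : ℝ :=
  sSup {s : ℝ | ∃ (w : V) (r : Q), (w, r) ≠ (0, 0) ∧ s = ‖F (w, r)‖ / √(‖w‖ ^ 2 + ‖r‖ ^ 2)}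

theorem supQuotient_nonneg (F : V × Q → E) : 0 ≤ supQuotient F := by
  refine Real.sSup_nonneg fun s ⟨w, r, _, hs⟩ ↦ hs ▸ ?_
  positivity

theorem norm_le_supQuotient_mul {F : V × Q → E} {C : ℝ}
    (hF : ∀ w r, ‖F (w, r)‖ ≤ C * √(‖w‖ ^ 2 + ‖r‖ ^ 2)) (w : V) (r : Q) :
    ‖F (w, r)‖ ≤ supQuotient F * √(‖w‖ ^ 2 + ‖r‖ ^ 2) := by
  have hbdd : BddAbove {s : ℝ | ∃ (w : V) (r : Q), (w, r) ≠ (0, 0) ∧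
      s = ‖F (w, r)‖ / √(‖w‖ ^ 2 + ‖r‖ ^ 2)} := by
    refine ⟨max C 0, fun s ⟨w, r, _, hs⟩ ↦ hs ▸ div_le_of_le_mul₀ (sqrt_nonneg _)
      (le_max_right C 0) ((hF w r).trans ?_)⟩
    gcongr
    exact le_max_left C 0
  rcases eq_or_lt_of_le (sqrt_nonneg (‖w‖ ^ 2 + ‖r‖ ^ 2)) with hN | hN
  · simpa [← hN] using hF w r
  · have hwr : (w, r) ≠ (0, 0) := by
      rintro ⟨⟩
      simp at hN
    rw [← div_le_iff₀ hN]
    exact le_csSup hbdd ⟨w, r, hwr, rfl⟩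

end SupQuotient

theorem norm_le_sqrt_sq_add_sq_left {V Q : Type*} [Norm V] [Norm Q] (w : V) (r : Q) :
    ‖w‖ ≤ √(‖w‖ ^ 2 + ‖r‖ ^ 2) :=
  le_sqrt_of_sq_le (by nlinarith [sq_nonneg ‖r‖])

theorem norm_le_sqrt_sq_add_sq_right {V Q : Type*} [Norm V] [Norm Q] (w : V) (r : Q) :
    ‖r‖ ≤ √(‖w‖ ^ 2 + ‖r‖ ^ 2) :=
  le_sqrt_of_sq_le (by nlinarith [sq_nonneg ‖w‖])

theorem sq_le_sq_of_sq_le_mul {x y : ℝ} (h : x ^ 2 ≤ x * y) : x ^ 2 ≤ y ^ 2 := by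
  nlinarith [sq_nonneg (x - y)]

section SaddleForm

variable {V Q : Type*} [NormedAddCommGroup V] [InnerProductSpace ℂ V]
  [NormedAddCommGroup Q] [InnerProductSpace ℂ Q]
  (a : V →ₗ[ℂ] V →ₛₗ[starRingEnd ℂ] ℂ) (d : Q →ₗ[ℂ] V →ₛₗ[starRingEnd ℂ] ℂ)

def saddleForm (x y : V × Q) : ℂ :=
  a x.1 y.1 + d x.2 y.1 - starRingEnd ℂ (d y.2 x.1)

theorem re_saddleForm_self (x : V × Q) : (saddleForm a d x x).re = (a x.1 x.1).re := by
  simp [saddleForm]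

theorem saddleForm_apply_zero_right (x : V × Q) (w : V) :
    saddleForm a d x (w, 0) = a x.1 w + d x.2 w := by
  simp [saddleForm]

variable {a d}

theorem norm_saddleForm_le {M M_d : ℝ} (hcont : ∀ u v : V, ‖a u v‖ ≤ M * ‖u‖ * ‖v‖)
    (hdbdd : ∀ (q : Q) (v : V), ‖d q v‖ ≤ M_d * ‖q‖ * ‖v‖) (v : V) (q : Q) (w : V) (r : Q) :
    ‖saddleForm a d (v, q) (w, r)‖ ≤
      (|M| * ‖v‖ + |M_d| * ‖q‖ + |M_d| * ‖v‖) * √(‖w‖ ^ 2 + ‖r‖ ^ 2) := by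
  have hw := norm_le_sqrt_sq_add_sq_left w r
  have hr := norm_le_sqrt_sq_add_sq_right w r
  calc ‖saddleForm a d (v, q) (w, r)‖
      ≤ ‖a v w‖ + ‖d q w‖ + ‖d r v‖ := by
        rw [saddleForm, ← RCLike.norm_conj (d r v)]
        exact (norm_sub_le _ _).trans (add_le_add_left (norm_add_le _ _) _)
    _ ≤ |M| * ‖v‖ * ‖w‖ + |M_d| * ‖q‖ * ‖w‖ + |M_d| * ‖r‖ * ‖v‖ := by
        gcongr
        · exact (hcont v w).trans (by gcongr; exact le_abs_self M)
        · exact (hdbdd q w).trans (by gcongr; exact le_abs_self M_d)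
        · exact (hdbdd r v).trans (by gcongr; exact le_abs_self M_d)
    _ ≤ _ := by
        have := mul_le_mul_of_nonneg_left hr (mul_nonneg (abs_nonneg M_d) (norm_nonneg v))
        nlinarith [mul_le_mul_of_nonneg_left hw (by positivity : 0 ≤ |M| * ‖v‖ + |M_d| * ‖q‖)]

variable {S : ℝ} {v : V} {q : Q}
  (hS : ∀ w r, ‖saddleForm a d (v, q) (w, r)‖ ≤ S * √(‖w‖ ^ 2 + ‖r‖ ^ 2))
include hS

theorem coercivity_mul_norm_sq_le {α : ℝ} (hcoer : ∀ v : V, α * ‖v‖ ^ 2 ≤ (a v v).re) :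
    α * ‖v‖ ^ 2 ≤ S * √(‖v‖ ^ 2 + ‖q‖ ^ 2) :=
  calc α * ‖v‖ ^ 2 ≤ (saddleForm a d (v, q) (v, q)).re := re_saddleForm_self a d (v, q) ▸ hcoer v
    _ ≤ ‖saddleForm a d (v, q) (v, q)‖ := Complex.re_le_norm _
    _ ≤ _ := hS v q

theorem norm_sq_le_of_rightInverse {M C_b : ℝ} (hS0 : 0 ≤ S)
    (hcont : ∀ u v : V, ‖a u v‖ ≤ M * ‖u‖ * ‖v‖)
    {vt : V} (hdvt : d q vt = (‖q‖ : ℂ) ^ 2) (hvt : ‖vt‖ ≤ C_b * ‖q‖) :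
    ‖q‖ ^ 2 ≤ C_b ^ 2 * (S + |M| * ‖v‖) ^ 2 := by
  have hA : (‖q‖ : ℂ) ^ 2 = saddleForm a d (v, q) (vt, 0) - a v vt := by
    rw [saddleForm_apply_zero_right, hdvt]
    ring
  have hq : ‖q‖ ^ 2 ≤ (S + |M| * ‖v‖) * ‖vt‖ :=
    calc ‖q‖ ^ 2 = ‖(‖q‖ : ℂ) ^ 2‖ := by simp
      _ ≤ ‖saddleForm a d (v, q) (vt, 0)‖ + ‖a v vt‖ := hA ▸ norm_sub_le _ _
      _ ≤ S * ‖vt‖ + |M| * ‖v‖ * ‖vt‖ := by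
          gcongr
          · simpa [sqrt_sq (norm_nonneg vt)] using hS vt 0
          · exact (hcont v vt).trans (by gcongr; exact le_abs_self M)
      _ = (S + |M| * ‖v‖) * ‖vt‖ := by ring
  rw [← mul_pow]
  refine sq_le_sq_of_sq_le_mul (hq.trans ?_)
  nlinarith [mul_le_mul_of_nonneg_left hvt (by positivity : 0 ≤ S + |M| * ‖v‖)]

end SaddleForm

theorem oseen_saddle_pressure_bound_general
    {V Q : Type*} [NormedAddCommGroup V] [InnerProductSpace ℂ V]
    [NormedAddCommGroup Q] [InnerProductSpace ℂ Q]
    (a : V →ₗ[ℂ] V →ₛₗ[starRingEnd ℂ] ℂ)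
    (d : Q →ₗ[ℂ] V →ₛₗ[starRingEnd ℂ] ℂ)
    (α M M_d C_b : ℝ) (hα : 0 < α)
    (hcoer : ∀ v : V, α * ‖v‖ ^ 2 ≤ (a v v).re)
    (hcont : ∀ u v : V, ‖a u v‖ ≤ M * ‖u‖ * ‖v‖)
    (hdbdd : ∀ (q : Q) (v : V), ‖d q v‖ ≤ M_d * ‖q‖ * ‖v‖)
    (hinv : ∀ q : Q, ∃ vt : V, d q vt = (‖q‖ : ℂ) ^ 2 ∧ ‖vt‖ ≤ C_b * ‖q‖)
    (A : V × Q → V × Q → ℂ)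
    (hA : ∀ (u : V) (p : Q) (v : V) (q : Q),
      A (u, p) (v, q) = a u v + d p v - starRingEnd ℂ (d q u))
    (v : V) (q : Q)
    (S : ℝ)
    (hS : S = sSup {s : ℝ | ∃ (w : V) (r : Q), (w, r) ≠ (0, 0) ∧
      s = ‖A (v, q) (w, r)‖ / Real.sqrt (‖w‖ ^ 2 + ‖r‖ ^ 2)}) :
    ‖q‖ ^ 2 ≤ 2 * C_b ^ 2 * S ^ 2 +
      2 * C_b ^ 2 * M ^ 2 * α⁻¹ * S * Real.sqrt (‖v‖ ^ 2 + ‖q‖ ^ 2) := by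
  obtain rfl : A = saddleForm a d := funext fun _ ↦ funext fun _ ↦ hA _ _ _ _
  replace hS : S = supQuotient (saddleForm a d (v, q)) := hS
  have hbound := hS ▸ norm_le_supQuotient_mul (norm_saddleForm_le hcont hdbdd v q)
  have hS0 : 0 ≤ S := hS ▸ supQuotient_nonneg _
  have hv : ‖v‖ ^ 2 ≤ α⁻¹ * (S * √(‖v‖ ^ 2 + ‖q‖ ^ 2)) :=
    (le_inv_mul_iff₀ hα).2 (coercivity_mul_norm_sq_le hbound hcoer)
  obtain ⟨vt, hdvt, hvt⟩ := hinv q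
  calc ‖q‖ ^ 2 ≤ C_b ^ 2 * (S + |M| * ‖v‖) ^ 2 :=
        norm_sq_le_of_rightInverse hbound hS0 hcont hdvt hvt
    _ ≤ C_b ^ 2 * (2 * (S ^ 2 + M ^ 2 * ‖v‖ ^ 2)) := by
        gcongr
        simpa [mul_pow] using add_sq_le (a := S) (b := |M| * ‖v‖)
    _ ≤ C_b ^ 2 * (2 * (S ^ 2 + M ^ 2 * (α⁻¹ * (S * √(‖v‖ ^ 2 + ‖q‖ ^ 2))))) := by gcongr
    _ = _ := by ring

/-- Pressure bound in the inf-sup argument for the Oseen-type saddle-point form: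
`‖q‖² ≤ 2C_b²S² + 2C_b²M²α⁻¹ S (‖v‖² + ‖q‖²)^(1/2)` where `S = S(v,q)` is the
inf-sup supremum in the second argument of `A`. -/
theorem oseen_saddle_pressure_bound
    {V Q : Type*} [NormedAddCommGroup V] [InnerProductSpace ℂ V] [CompleteSpace V]
    [NormedAddCommGroup Q] [InnerProductSpace ℂ Q] [CompleteSpace Q]
    (a : V →ₗ[ℂ] V →ₛₗ[starRingEnd ℂ] ℂ)
    (d : Q →ₗ[ℂ] V →ₛₗ[starRingEnd ℂ] ℂ)
    (α M M_d C_b : ℝ) (hα : 0 < α) (hM : 0 < M) (hMd : 0 < M_d) (hCb : 0 < C_b)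
    (hcoer : ∀ v : V, α * ‖v‖ ^ 2 ≤ (a v v).re)
    (hcont : ∀ u v : V, ‖a u v‖ ≤ M * ‖u‖ * ‖v‖)
    (hdbdd : ∀ (q : Q) (v : V), ‖d q v‖ ≤ M_d * ‖q‖ * ‖v‖)
    (hinv : ∀ q : Q, ∃ vt : V, d q vt = (‖q‖ : ℂ) ^ 2 ∧ ‖vt‖ ≤ C_b * ‖q‖)
    (A : V × Q → V × Q → ℂ)
    (hA : ∀ (u : V) (p : Q) (v : V) (q : Q),
      A (u, p) (v, q) = a u v + d p v - starRingEnd ℂ (d q u))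
    (v : V) (q : Q) (hvq : (v, q) ≠ (0, 0))
    (S : ℝ)
    (hS : S = sSup {s : ℝ | ∃ (w : V) (r : Q), (w, r) ≠ (0, 0) ∧
      s = ‖A (v, q) (w, r)‖ / Real.sqrt (‖w‖ ^ 2 + ‖r‖ ^ 2)}) :
    ‖q‖ ^ 2 ≤ 2 * C_b ^ 2 * S ^ 2 +
      2 * C_b ^ 2 * M ^ 2 * α⁻¹ * S * Real.sqrt (‖v‖ ^ 2 + ‖q‖ ^ 2) :=
  oseen_saddle_pressure_bound_general a d α M M_d C_b hα hcoer hcont hdbdd hinv A hA v q S hS
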